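/- Let x be a real number and n ≥ 1 a natural number such that u_n(x) ≠ 0 and u_n(x) + v_n(x) ≠ 0. Then (v_n(x)/u_n(x)) ⊙ ((u_n(x) − v_n(x))/(u_n(x) + v_n(x))) = 1. (Equivalently, y = (u_n(x) + v_n(x))/(u_n(x) − v_n(x)) solves (1/x)^{⊙n} ⊙ (1/y) = 1.) -/
import Mathlib


/-- The tangent-addition operation `x ⊙ y = (x + y)/(1 - x*y)`. -/
noncomputable def odot (x y : ℝ) : ℝ := (x + y) / (1 - x * y)

/-- The sequence `u_n(x)`: `u_0 = 1`, `u_1 = x`, `u_n = 2x·u_{n-1} - (1+x²)·u_{n-2}`. -/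
noncomputable def u (x : ℝ) : ℕ → ℝ
  | 0 => 1
  | 1 => x
  | (n + 2) => 2 * x * u x (n + 1) - (1 + x ^ 2) * u x n

/-- The sequence `v_n(x)`: `v_0 = 0`, `v_1 = 1`, `v_n = 2x·v_{n-1} - (1+x²)·v_{n-2}`. -/
noncomputable def v (x : ℝ) : ℕ → ℝ
  | 0 => 0
  | 1 => 1
  | (n + 2) => 2 * x * v x (n + 1) - (1 + x ^ 2) * v x n

theorem odot_solution (x : ℝ) (n : ℕ) (hn : 1 ≤ n)
    (hu : u x n ≠ 0) (huv : u x n + v x n ≠ 0) :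
    odot (v x n / u x n) ((u x n - v x n) / (u x n + v x n)) = 1 := by
  set a := u x n with ha
  set b := v x n with hb
  have h2 : a^2 + b^2 ≠ 0 := by positivity
  have hden : 1 - (b / a) * ((a - b) / (a + b)) ≠ 0 := by
    rw [div_mul_div_comm]
    rw [sub_ne_zero]
    intro h
    apply h2
    have := h.symm
    rw [div_eq_one_iff_eq (by exact mul_ne_zero hu huv)] at this
    nlinarith [this]
  rw [odot, div_eq_one_iff_eq hden]
  field_simp
  ring
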